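/- arXiv:1804.02174 — 2 statements merged into one kernel-verified Lean document; each statement's English description precedes it below -/
import Mathlib

section
/- For all non-negative integers i and b and every R > 0, ∫_{R}^{∞} exp(−r)·χ_i(r)·r^{2b} dr = exp(−R)·Σ_{j=0}^{b} (2^j · b!/(b−j)!) · R^{2(b−j)−1} · χ_{i+j+1}(R). -/
open MeasureTheory

/-- The reverse Bessel polynomials, defined by `χ_0 = 1`, `χ_1 = X` and
`χ_{i+2} = X²·χ_i + (2i+1)·χ_{i+1}`. -/
noncomputable def chi : ℕ → Polynomial ℝ
  | 0 => 1
  | 1 => Polynomial.X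
  | i + 2 => Polynomial.X ^ 2 * chi i + Polynomial.C (2 * (i : ℝ) + 1) * chi (i + 1)

lemma chi_succ_succ (n : ℕ) :
    chi (n + 2) = Polynomial.X ^ 2 * chi n + Polynomial.C (2 * (n : ℝ) + 1) * chi (n + 1) := rfl

lemma chi_deriv (i : ℕ) :
    Polynomial.X * (chi (i + 1)).derivative
      = (Polynomial.X + 1) * chi (i + 1) - Polynomial.X ^ 2 * chi i := by
  induction i using Nat.twoStepInduction with
  | zero => simp [chi]; ring
  | one =>
    rw [chi_succ_succ 0]
    simp [chi, map_ofNat]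
    ring
  | more n ih1 ih2 =>
    have ih2' : Polynomial.X * (chi (n + 2)).derivative
        = (Polynomial.X + 1) * chi (n + 2) - Polynomial.X ^ 2 * chi (n + 1) := ih2
    have h2 : chi (n + 2) = Polynomial.X ^ 2 * chi n + (2 * Polynomial.C (n : ℝ) + 1) * chi (n + 1) := by
      rw [chi_succ_succ n]; simp only [map_add, map_mul, map_one, map_ofNat]
    have h3 : chi (n + 3) = Polynomial.X ^ 2 * chi (n + 1) + Polynomial.C (2 * ((n : ℝ) + 1) + 1) * chi (n + 2) := by
      have := chi_succ_succ (n + 1)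
      rw [show (((n : ℕ) + 1 : ℕ) : ℝ) = (n : ℝ) + 1 by push_cast; ring] at this
      exact this
    show Polynomial.X * (chi (n + 3)).derivative
      = (Polynomial.X + 1) * chi (n + 3) - Polynomial.X ^ 2 * chi (n + 2)
    rw [h3]
    simp only [Polynomial.derivative_add, Polynomial.derivative_mul, Polynomial.derivative_pow,
      Polynomial.derivative_X, Polynomial.derivative_C]
    simp only [Nat.cast_ofNat, map_add, map_mul, map_one, map_ofNat]
    linear_combination Polynomial.X ^ 2 * ih1 + (2 * Polynomial.C ((n : ℝ)) + 3) * ih2'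
      + Polynomial.X ^ 2 * h2

lemma chi_deriv_eval (i : ℕ) (r : ℝ) :
    r * (chi (i + 1)).derivative.eval r
      = (r + 1) * (chi (i + 1)).eval r - r ^ 2 * (chi i).eval r := by
  have := congrArg (Polynomial.eval r) (chi_deriv i)
  simpa using this

lemma integrableOn_exp_poly (p : Polynomial ℝ) {a : ℝ} (ha : 0 ≤ a) :
    IntegrableOn (fun r => Real.exp (-r) * p.eval r) (Set.Ioi a) := by
  induction p using Polynomial.induction_on' with
  | add p q hp hq => exact (hp.add hq).congr_fun (fun x _ => by simp [mul_add]) measurableSet_Ioi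
  | monomial n c =>
    have h := (Real.GammaIntegral_convergent (s := (n : ℝ) + 1) (by positivity)).mono_set
      (Set.Ioi_subset_Ioi ha)
    have h2 : IntegrableOn (fun x : ℝ => Real.exp (-x) * x ^ n) (Set.Ioi a) := by
      refine h.congr_fun (fun x hx => ?_) measurableSet_Ioi
      rw [show (n : ℝ) + 1 - 1 = (n : ℝ) by ring]
      simp [Real.rpow_natCast]
    exact IntegrableOn.congr_fun (h2.const_mul c)
      (fun x _ => by simp [Polynomial.eval_monomial]; ring) measurableSet_Ioi

lemma hasDerivAt_base (i : ℕ) {r : ℝ} (hr : 0 < r) :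
    HasDerivAt (fun x => Real.exp (-x) * (chi (i + 1)).eval x / x)
      (-(Real.exp (-r) * (chi i).eval r)) r := by
  have h1 : HasDerivAt (fun x : ℝ => Real.exp (-x)) (Real.exp (-r) * -1) r :=
    (hasDerivAt_id r).neg.exp
  have h2 := (chi (i + 1)).hasDerivAt r
  have h3 : HasDerivAt (fun x => Real.exp (-x) * (chi (i + 1)).eval x / x) _ r :=
    (h1.mul h2).div (hasDerivAt_id' (𝕜 := ℝ) (x := r)) hr.ne'
  convert h3 using 1
  have key := chi_deriv_eval i r
  simp only [Pi.mul_apply]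
  rw [eq_div_iff (pow_ne_zero 2 hr.ne')]
  linear_combination (-(Real.exp (-r))) * key

lemma hasDerivAt_step (i b : ℕ) (r : ℝ) :
    HasDerivAt (fun x => Real.exp (-x) * (chi (i + 1)).eval x * x ^ (2 * b + 1))
      ((2 * (b : ℝ) + 2) * (Real.exp (-r) * (chi (i + 1)).eval r * r ^ (2 * b))
        - Real.exp (-r) * (chi i).eval r * r ^ (2 * (b + 1))) r := by
  have h1 : HasDerivAt (fun x : ℝ => Real.exp (-x)) (Real.exp (-r) * -1) r :=
    (hasDerivAt_id r).neg.exp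
  have h2 := (chi (i + 1)).hasDerivAt r
  have h3 := hasDerivAt_pow (2 * b + 1) r
  have h4 : HasDerivAt (fun x => Real.exp (-x) * (chi (i + 1)).eval x * x ^ (2 * b + 1)) _ r :=
    (h1.mul h2).mul h3
  convert h4 using 1
  have key := chi_deriv_eval i r
  simp only [Nat.add_sub_cancel, Pi.mul_apply]
  push_cast
  linear_combination (-(Real.exp (-r)) * r ^ (2 * b)) * key

lemma tendsto_base (i : ℕ) :
    Filter.Tendsto (fun x => Real.exp (-x) * (chi (i + 1)).eval x / x)
      Filter.atTop (nhds 0) := by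
  have h3 := ((chi (i + 1)).tendsto_div_exp_atTop).mul tendsto_inv_atTop_zero
  rw [mul_zero] at h3
  exact h3.congr fun x => by rw [Real.exp_neg]; ring

lemma tendsto_step (i b : ℕ) :
    Filter.Tendsto (fun x => Real.exp (-x) * (chi (i + 1)).eval x * x ^ (2 * b + 1))
      Filter.atTop (nhds 0) := by
  have h1 := (chi (i + 1) * Polynomial.X ^ (2 * b + 1)).tendsto_div_exp_atTop
  exact h1.congr fun x => by
    simp only [Polynomial.eval_mul, Polynomial.eval_pow, Polynomial.eval_X, Real.exp_neg]
    ring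

lemma integral_base (i : ℕ) {R : ℝ} (hR : 0 < R) :
    ∫ r in Set.Ioi R, Real.exp (-r) * (chi i).eval r
      = Real.exp (-R) * (chi (i + 1)).eval R / R := by
  have hint : IntegrableOn (fun r => -(Real.exp (-r) * (chi i).eval r)) (Set.Ioi R) :=
    (integrableOn_exp_poly (-(chi i)) hR.le).congr_fun (fun x _ => by simp) measurableSet_Ioi
  have h := integral_Ioi_of_hasDerivAt_of_tendsto'
    (f := fun x => Real.exp (-x) * (chi (i + 1)).eval x / x)
    (f' := fun r => -(Real.exp (-r) * (chi i).eval r))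
    (fun x hx => hasDerivAt_base i (lt_of_lt_of_le hR hx)) hint (tendsto_base i)
  rw [integral_neg] at h
  linarith [h]

lemma integral_step (i b : ℕ) {R : ℝ} (hR : 0 < R) :
    ∫ r in Set.Ioi R, Real.exp (-r) * (chi i).eval r * r ^ (2 * (b + 1))
      = Real.exp (-R) * (chi (i + 1)).eval R * R ^ (2 * b + 1)
        + (2 * (b : ℝ) + 2) * ∫ r in Set.Ioi R, Real.exp (-r) * (chi (i + 1)).eval r * r ^ (2 * b) := by
  have hint1 : IntegrableOn (fun r => Real.exp (-r) * (chi (i + 1)).eval r * r ^ (2 * b)) (Set.Ioi R) :=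
    (integrableOn_exp_poly (chi (i + 1) * Polynomial.X ^ (2 * b)) hR.le).congr_fun
      (fun x _ => by simp [mul_assoc]) measurableSet_Ioi
  have hint2 : IntegrableOn (fun r => Real.exp (-r) * (chi i).eval r * r ^ (2 * (b + 1))) (Set.Ioi R) :=
    (integrableOn_exp_poly (chi i * Polynomial.X ^ (2 * (b + 1))) hR.le).congr_fun
      (fun x _ => by simp [mul_assoc]) measurableSet_Ioi
  have hint : IntegrableOn (fun r => (2 * (b : ℝ) + 2) * (Real.exp (-r) * (chi (i + 1)).eval r * r ^ (2 * b))
      - Real.exp (-r) * (chi i).eval r * r ^ (2 * (b + 1))) (Set.Ioi R) :=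
    (hint1.const_mul _).sub hint2
  have h := integral_Ioi_of_hasDerivAt_of_tendsto'
    (f := fun x => Real.exp (-x) * (chi (i + 1)).eval x * x ^ (2 * b + 1))
    (f' := fun r => (2 * (b : ℝ) + 2) * (Real.exp (-r) * (chi (i + 1)).eval r * r ^ (2 * b))
      - Real.exp (-r) * (chi i).eval r * r ^ (2 * (b + 1)))
    (fun x _ => hasDerivAt_step i b x) hint (tendsto_step i b)
  rw [integral_sub (hint1.const_mul _) hint2, integral_const_mul] at h
  simp only [zero_sub] at h
  linarith [h]

theorem integral_exp_chi_pow (i b : ℕ) (R : ℝ) (hR : 0 < R) :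
    ∫ r in Set.Ioi R, Real.exp (-r) * (chi i).eval r * r ^ (2 * b)
      = Real.exp (-R) * ∑ j ∈ Finset.range (b + 1),
          2 ^ j * ((Nat.factorial b : ℝ) / (Nat.factorial (b - j)))
            * R ^ (2 * ((b : ℤ) - j) - 1) * (chi (i + j + 1)).eval R := by
  induction b generalizing i with
  | zero =>
    simp only [Finset.sum_range_one, Nat.mul_zero, pow_zero, mul_one]
    rw [integral_base i hR]
    norm_num
    field_simp
  | succ b ih =>
    rw [integral_step i b hR, ih (i + 1)]
    conv_rhs => rw [Finset.sum_range_succ']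
    rw [mul_add]
    conv_lhs => rw [add_comm]
    congr 1
    · rw [Finset.mul_sum, Finset.mul_sum, Finset.mul_sum]
      refine Finset.sum_congr rfl fun j hj => ?_
      have hidx : i + 1 + j + 1 = i + (j + 1) + 1 := by omega
      have hfac : b + 1 - (j + 1) = b - j := by omega
      have hexp : (2 * (((b + 1 : ℕ) : ℤ) - ((j + 1 : ℕ) : ℤ)) - 1) = 2 * ((b : ℤ) - (j : ℤ)) - 1 := by
        push_cast; ring
      rw [hidx, hfac, hexp, Nat.factorial_succ]
      push_cast
      ring
    · have hexp : (2 * (((b + 1 : ℕ) : ℤ) - ((0 : ℕ) : ℤ)) - 1) = ((2 * b + 1 : ℕ) : ℤ) := by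
        push_cast; ring
      rw [hexp, zpow_natCast, Nat.sub_zero, Nat.add_zero, pow_zero,
        div_self (by exact_mod_cast (Nat.factorial_pos (b + 1)).ne' : (Nat.factorial (b + 1) : ℝ) ≠ 0)]
      ring
end

section
/- Let p ≥ 0 and R > 0. Suppose the real numbers α̃_0, …, α̃_p satisfy the Hankel linear system Σ_{i=0}^{p} χ_{i+j}(R)·α̃_i = δ_{0j} for every j with 0 ≤ j ≤ p, and suppose det[χ_{i+j}(R)]_{i,j=0}^{p} ≠ 0. Set α_i = exp(R)·R^{2i}·α̃_i and g(r) = Σ_{i=0}^{p} α_i·ψ_i(r). Then the (p+1)-st derivative of g at R equals g^{(p+1)}(R) = − det[χ_{i+j+1}(R)]_{i,j=0}^{p} / ( R^{p+1} · det[χ_{i+j}(R)]_{i,j=0}^{p} ), where det[χ_{i+j+a}(R)]_{i,j=0}^{p} denotes the determinant of the (p+1)×(p+1) matrix whose (i,j) entry is χ_{i+j+a}(R). -/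
open Polynomial

/-- The sequence of functions `ψ_i : ℝ → ℝ` defined inductively by
`ψ_0(r) = exp(−r)` and `ψ_{i+1}(r) = −ψ_i'(r)/r`. -/
noncomputable def psi : ℕ → ℝ → ℝ
  | 0 => fun r => Real.exp (-r)
  | i + 1 => fun r => -(deriv (psi i) r) / r

lemma chi_rec (i : ℕ) : chi (i+2) = X ^ 2 * chi i + C (2*(i:ℝ)+1) * chi (i+1) := rfl

lemma chi_deriv_s16 : ∀ m : ℕ, chi (m+1) = (X + C (2*(m:ℝ))) * chi m - X * (chi m).derivative
  | 0 => by simp [chi]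
  | 1 => by
      rw [show (1:ℕ)+1 = 0+2 from rfl, chi_rec 0]
      show _ = (X + C (2*((1:ℕ):ℝ))) * chi 1 - X * (chi 1).derivative
      simp [chi, map_ofNat]
      ring
  | (m+2) => by
      have h1 := chi_deriv_s16 m
      have h2 := chi_deriv_s16 (m+1)
      have h3 : chi (m+1+1) = X^2 * chi m + C (2*(m:ℝ)+1) * chi (m+1) := chi_rec m
      rw [show m+2+1 = (m+1)+2 from rfl, chi_rec (m+1), chi_rec m]
      simp only [Nat.cast_add, Nat.cast_one, Nat.cast_ofNat, map_add, map_mul, map_one, map_ofNat,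
        derivative_add, derivative_mul, derivative_pow, derivative_X, derivative_C,
        derivative_one, derivative_ofNat] at h1 h2 h3 ⊢
      linear_combination (X^2) * h1 + (2 * C (m:ℝ) + 1) * h2 - (2 * C (m:ℝ) + 1) * h3

noncomputable def psiE (i : ℕ) : ℝ → ℝ := fun r => Real.exp (-r) * (chi i).eval r / r ^ (2*i)

lemma pow_hasDerivAt' (n : ℕ) {r : ℝ} (hr : r ≠ 0) :
    HasDerivAt (fun s : ℝ => s ^ n) ((n:ℝ) * r ^ n / r) r := by
  refine (hasDerivAt_pow n r).congr_deriv ?_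
  rcases n with _|m
  · simp
  · rw [pow_succ]
    field_simp
    ring_nf
    simp

lemma psiE_hasDerivAt (i : ℕ) {r : ℝ} (hr : 0 < r) :
    HasDerivAt (psiE i) (-r * psiE (i+1) r) r := by
  have he : HasDerivAt (fun s : ℝ => Real.exp (-s)) (-Real.exp (-r)) r := by
    exact ((Real.hasDerivAt_exp (-r)).comp r (hasDerivAt_neg r)).congr_deriv (by ring)
  have h1 : HasDerivAt (fun s : ℝ => Real.exp (-s) * (chi i).eval s)
      (-Real.exp (-r) * (chi i).eval r + Real.exp (-r) * (chi i).derivative.eval r) r :=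
    he.mul ((chi i).hasDerivAt r)
  have h2 := pow_hasDerivAt' (2*i) (ne_of_gt hr)
  have h3 := h1.div h2 (by positivity)
  refine h3.congr_deriv ?_
  have hchi := congrArg (Polynomial.eval r) (chi_deriv_s16 i)
  simp only [eval_sub, eval_add, eval_mul, eval_X, eval_C] at hchi
  unfold psiE
  have hrn : r ^ (2*i) ≠ 0 := by positivity
  rw [show 2*(i+1) = 2*i + 2 by ring, pow_add, hchi]
  field_simp
  push_cast
  ring

lemma psi_eqOn (i : ℕ) : Set.EqOn (psi i) (psiE i) (Set.Ioi 0) := by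
  induction i with
  | zero => intro r _; simp [psi, psiE, chi]
  | succ i ih =>
    intro r hr
    have hr' : (0:ℝ) < r := hr
    have hmem : Set.Ioi (0:ℝ) ∈ nhds r := isOpen_Ioi.mem_nhds hr
    have hd : deriv (psi i) r = -r * psiE (i+1) r := by
      have heq : psi i =ᶠ[nhds r] psiE i := Filter.eventuallyEq_of_mem hmem ih
      rw [heq.deriv_eq]
      exact (psiE_hasDerivAt i hr').deriv
    show -(deriv (psi i) r) / r = _
    rw [hd]
    field_simp

lemma psi_hasDerivAt (i : ℕ) {r : ℝ} (hr : 0 < r) :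
    HasDerivAt (psi i) (-r * psi (i+1) r) r := by
  have hmem : Set.Ioi (0:ℝ) ∈ nhds r := isOpen_Ioi.mem_nhds hr
  have heq : psiE i =ᶠ[nhds r] psi i :=
    Filter.eventuallyEq_of_mem hmem (fun x hx => (psi_eqOn i hx).symm)
  have h := (psiE_hasDerivAt i hr).congr_of_eventuallyEq heq.symm
  rw [psi_eqOn (i+1) (Set.mem_Ioi.mpr hr)]
  exact h

noncomputable def Acoef : ℕ → ℕ → Polynomial ℝ
  | 0, 0 => 1
  | 0, _+1 => 0
  | k+1, 0 => (Acoef k 0).derivative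
  | k+1, m+1 => (Acoef k (m+1)).derivative - Polynomial.X * Acoef k m

lemma Acoef_of_lt : ∀ {k m : ℕ}, k < m → Acoef k m = 0
  | 0, _+1, _ => rfl
  | k+1, m+1, h => by
      show (Acoef k (m+1)).derivative - X * Acoef k m = 0
      rw [Acoef_of_lt (by omega), Acoef_of_lt (by omega)]
      simp

lemma Acoef_diag (k : ℕ) : Acoef k k = (-X)^k := by
  induction k with
  | zero => rfl
  | succ k ih =>
      show (Acoef k (k+1)).derivative - X * Acoef k k = (-X)^(k+1)
      rw [Acoef_of_lt (Nat.lt_succ_self k), ih]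
      simp [pow_succ]
      ring

lemma Acoef_succ_zero (k : ℕ) : Acoef (k+1) 0 = 0 := by
  induction k with
  | zero => show (Acoef 0 0).derivative = 0; show (1 : Polynomial ℝ).derivative = 0; simp
  | succ k ih => show (Acoef (k+1) 0).derivative = 0; rw [ih]; simp

lemma sum_shift_aux (k : ℕ) (r : ℝ) (d e f g : ℕ → ℝ) (hf0 : f 0 = d 0)
    (hfs : ∀ m, f (m+1) = d (m+1) - r * e m) (htop : d (k+1) = 0) :
    (∑ m ∈ Finset.range (k+1), (d m * g m + e m * (-r * g (m+1))))
      = ∑ m ∈ Finset.range (k+2), f m * g m := by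
  rw [Finset.sum_range_succ' (fun m => f m * g m) (k+1), Finset.sum_add_distrib,
    Finset.sum_range_succ' (fun m => d m * g m) k]
  have h1 : ∑ m ∈ Finset.range k, d (m+1) * g (m+1)
      = ∑ m ∈ Finset.range (k+1), d (m+1) * g (m+1) := by
    rw [Finset.sum_range_succ, htop]; ring
  have h2 : ∑ m ∈ Finset.range (k+1), f (m+1) * g (m+1)
      = ∑ m ∈ Finset.range (k+1), d (m+1) * g (m+1)
        + ∑ m ∈ Finset.range (k+1), e m * (-r * g (m+1)) := by
    rw [← Finset.sum_add_distrib]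
    exact Finset.sum_congr rfl (fun m _ => by rw [hfs m]; ring)
  rw [h1, h2, hf0]
  ring

lemma iteratedDeriv_psi_sum (N : ℕ) (c : Fin N → ℝ) (k : ℕ) :
    ∀ {r : ℝ}, 0 < r →
    iteratedDeriv k (fun s => ∑ i : Fin N, c i * psi i s) r
      = ∑ m ∈ Finset.range (k+1),
          (Acoef k m).eval r * (∑ i : Fin N, c i * psi ((i : ℕ) + m) r) := by
  induction k with
  | zero =>
      intro r _
      simp only [iteratedDeriv_zero, Finset.range_one, Finset.sum_singleton]
      have : Acoef 0 0 = 1 := rfl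
      simp [this]
  | succ k ih =>
      intro r hr
      rw [iteratedDeriv_succ]
      have hmem : Set.Ioi (0:ℝ) ∈ nhds r := isOpen_Ioi.mem_nhds hr
      have heq : iteratedDeriv k (fun s => ∑ i : Fin N, c i * psi i s) =ᶠ[nhds r]
          (fun s => ∑ m ∈ Finset.range (k+1),
            (Acoef k m).eval s * (∑ i : Fin N, c i * psi ((i : ℕ) + m) s)) :=
        Filter.eventuallyEq_of_mem hmem (fun x hx => ih hx)
      rw [heq.deriv_eq]
      have hG : ∀ m : ℕ, HasDerivAt (fun s => ∑ i : Fin N, c i * psi ((i : ℕ) + m) s)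
          (-r * ∑ i : Fin N, c i * psi ((i : ℕ) + (m+1)) r) r := by
        intro m
        have h := HasDerivAt.fun_sum
          (fun (i : Fin N) (_ : i ∈ Finset.univ) =>
            ((psi_hasDerivAt ((i : ℕ) + m) hr).const_mul (c i)))
        refine h.congr_deriv ?_
        rw [Finset.mul_sum]
        exact Finset.sum_congr rfl (fun i _ => by
          rw [show (i : ℕ) + (m+1) = ((i : ℕ) + m) + 1 by ring]; ring)
      have hD := HasDerivAt.fun_sum
        (fun (m : ℕ) (_ : m ∈ Finset.range (k+1)) =>
          (((Acoef k m).hasDerivAt r).mul (hG m)))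
      rw [(show HasDerivAt (fun s => ∑ m ∈ Finset.range (k+1),
          (Acoef k m).eval s * (∑ i : Fin N, c i * psi ((i : ℕ) + m) s)) _ r from hD).deriv]
      exact sum_shift_aux k r
        (fun m => (Acoef k m).derivative.eval r)
        (fun m => (Acoef k m).eval r)
        (fun m => (Acoef (k+1) m).eval r)
        (fun m => ∑ i : Fin N, c i * psi ((i : ℕ) + m) r)
        (by show ((Acoef k 0).derivative).eval r = _; rfl)
        (fun m => by
          show ((Acoef k (m+1)).derivative - X * Acoef k m).eval r = _
          simp)
        (by show ((Acoef k (k+1)).derivative).eval r = 0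
            rw [Acoef_of_lt (Nat.lt_succ_self k)]; simp)

lemma part1 (p : ℕ) (R : ℝ) (hR : 0 < R) (αt : Fin (p + 1) → ℝ)
    (hsys : ∀ j : Fin (p + 1),
      (∑ i : Fin (p + 1), (chi ((i : ℕ) + (j : ℕ))).eval R * αt i)
        = if (j : ℕ) = 0 then 1 else 0) :
    iteratedDeriv (p + 1)
        (fun r => ∑ i : Fin (p + 1), (Real.exp R * R ^ (2 * (i : ℕ)) * αt i) * psi i r) R
      = (-R)^(p+1) * ((∑ i : Fin (p+1), (chi ((i:ℕ)+(p+1))).eval R * αt i) / R ^ (2*(p+1))) := by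
  rw [iteratedDeriv_psi_sum (p+1) (fun i => Real.exp R * R ^ (2*(i:ℕ)) * αt i) (p+1) hR]
  have hGm : ∀ m : ℕ, (∑ i : Fin (p+1), (Real.exp R * R ^ (2*(i:ℕ)) * αt i) * psi ((i:ℕ)+m) R)
      = (∑ i : Fin (p+1), (chi ((i:ℕ)+m)).eval R * αt i) / R ^ (2*m) := by
    intro m
    rw [Finset.sum_div]
    refine Finset.sum_congr rfl (fun i _ => ?_)
    rw [psi_eqOn _ (Set.mem_Ioi.mpr hR)]
    unfold psiE
    rw [show 2*((i:ℕ)+m) = 2*(i:ℕ)+2*m by ring, pow_add, Real.exp_neg]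
    have h1 : R ^ (2*(i:ℕ)) ≠ 0 := by positivity
    have h2 : R ^ (2*m) ≠ 0 := by positivity
    have h3 : Real.exp R ≠ 0 := Real.exp_ne_zero R
    field_simp
  rw [Finset.sum_eq_single_of_mem (p+1) (Finset.self_mem_range_succ (p+1))
    (fun b hb hne => by
      rcases Nat.eq_zero_or_pos b with rfl | hbpos
      · rw [Acoef_succ_zero]; simp
      · have hble : b ≤ p := by
          have := Finset.mem_range.mp hb; omega
        rw [hGm b]
        have hs := hsys ⟨b, by omega⟩
        have hb0 : ¬ (b = 0) := by omega
        rw [hs]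
        simp [hb0])]
  rw [hGm (p+1), Acoef_diag]
  simp only [eval_pow, eval_neg, eval_X]

open Matrix in
lemma part2 (p : ℕ) (R : ℝ) (αt : Fin (p + 1) → ℝ)
    (hsys : ∀ j : Fin (p + 1),
      (∑ i : Fin (p + 1), (chi ((i : ℕ) + (j : ℕ))).eval R * αt i)
        = if (j : ℕ) = 0 then 1 else 0)
    (hdet : Matrix.det
        (Matrix.of fun i j : Fin (p + 1) => (chi ((i : ℕ) + (j : ℕ))).eval R) ≠ 0) :
    Matrix.det (Matrix.of fun i j : Fin (p + 1) => (chi ((i : ℕ) + (j : ℕ) + 1)).eval R)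
      = (-1)^p * ((∑ i : Fin (p+1), (chi ((i:ℕ)+(p+1))).eval R * αt i)
          * Matrix.det (Matrix.of fun i j : Fin (p + 1) => (chi ((i : ℕ) + (j : ℕ))).eval R)) := by
  set M : Matrix (Fin (p+1)) (Fin (p+1)) ℝ :=
    Matrix.of fun i j : Fin (p + 1) => (chi ((i : ℕ) + (j : ℕ))).eval R with hMdef
  set v : Fin (p+1) → ℝ := fun i => (chi ((i:ℕ)+(p+1))).eval R with hvdef
  have hMsymm : Mᵀ = M := by
    ext i j
    simp only [Matrix.transpose_apply, hMdef, Matrix.of_apply, Nat.add_comm]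
  have hMv : M *ᵥ αt = Pi.single 0 1 := by
    funext j
    have hs : ∑ i : Fin (p+1), (chi ((j:ℕ)+(i:ℕ))).eval R * αt i
        = if (j:ℕ) = 0 then 1 else 0 := by
      rw [← hsys j]
      exact Finset.sum_congr rfl (fun i _ => by rw [Nat.add_comm])
    simp only [Matrix.mulVec, dotProduct, hMdef, Matrix.of_apply]
    rw [hs]
    by_cases h : j = 0
    · subst h; simp
    · have h' : ¬ ((j:ℕ) = 0) := fun hh => h (Fin.ext hh)
      simp [h', Pi.single_apply, h]
  have hunit : IsUnit M.det := isUnit_iff_ne_zero.mpr hdet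
  have hαt : αt = M⁻¹ *ᵥ Pi.single 0 1 := by
    rw [← hMv, Matrix.mulVec_mulVec, Matrix.nonsing_inv_mul M hunit, Matrix.one_mulVec]
  have hsmul : M.det • αt = M.adjugate *ᵥ Pi.single 0 1 := by
    rw [hαt, ← Matrix.smul_mulVec]
    rw [Matrix.inv_def, smul_smul, Ring.inverse_eq_inv, mul_inv_cancel₀ hdet, one_smul]
  have hadj : ∀ i, M.det * αt i = M.adjugate i 0 := by
    intro i
    have h := congrFun hsmul i
    simpa [Matrix.mulVec_single] using h
  have hadjsymm : ∀ i, M.adjugate i 0 = M.adjugate 0 i := by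
    intro i
    conv_lhs => rw [← hMsymm]
    rw [← Matrix.adjugate_transpose, Matrix.transpose_apply]
  have key : (∑ i : Fin (p+1), v i * αt i) * M.det = (M.updateCol 0 v).det := by
    have h1 : (∑ i : Fin (p+1), v i * αt i) * M.det
        = ∑ i : Fin (p+1), M.adjugate 0 i * v i := by
      rw [Finset.sum_mul]
      exact Finset.sum_congr rfl (fun i _ => by
        rw [← hadjsymm, ← hadj]; ring)
    rw [h1]
    have h2 : ∑ i : Fin (p+1), M.adjugate 0 i * v i = (M.adjugate *ᵥ v) 0 := rfl
    rw [h2, ← Matrix.cramer_eq_adjugate_mulVec, Matrix.cramer_apply]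
  have hperm : Matrix.det (Matrix.of fun i j : Fin (p + 1) => (chi ((i : ℕ) + (j : ℕ) + 1)).eval R)
      = (((finRotate (p+1)).sign : ℤ) : ℝ) * (M.updateCol 0 v).det := by
    rw [← Matrix.det_permute' (finRotate (p+1)) (M.updateCol 0 v)]
    congr 1
    ext i j
    simp only [Matrix.submatrix_apply, id_eq, Matrix.of_apply]
    rcases eq_or_ne j (Fin.last p) with rfl | hj
    · rw [finRotate_succ_apply, Fin.last_add_one]
      simp only [Matrix.updateCol_apply, hvdef, Fin.val_last, Nat.add_assoc]
      simp
    · have hval : ((finRotate (p+1) j : Fin (p+1)) : ℕ) = (j:ℕ) + 1 := by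
        rw [finRotate_succ_apply, Fin.val_add_one]
        simp [hj]
      have hne0 : finRotate (p+1) j ≠ 0 := by
        intro h
        rw [h] at hval
        simp at hval
      rw [Matrix.updateCol_apply, if_neg hne0]
      simp only [hMdef, Matrix.of_apply, hval, Nat.add_assoc]
  rw [hperm, ← key, sign_finRotate]
  push_cast
  ring

theorem high_deriv_hankel (p : ℕ) (R : ℝ) (hR : 0 < R) (αt : Fin (p + 1) → ℝ)
    (hsys : ∀ j : Fin (p + 1),
      (∑ i : Fin (p + 1), (chi ((i : ℕ) + (j : ℕ))).eval R * αt i)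
        = if (j : ℕ) = 0 then 1 else 0)
    (hdet : Matrix.det
        (Matrix.of fun i j : Fin (p + 1) => (chi ((i : ℕ) + (j : ℕ))).eval R) ≠ 0) :
    iteratedDeriv (p + 1)
        (fun r => ∑ i : Fin (p + 1), (Real.exp R * R ^ (2 * (i : ℕ)) * αt i) * psi i r) R
      = - Matrix.det
            (Matrix.of fun i j : Fin (p + 1) => (chi ((i : ℕ) + (j : ℕ) + 1)).eval R)
          / (R ^ (p + 1) * Matrix.det
            (Matrix.of fun i j : Fin (p + 1) => (chi ((i : ℕ) + (j : ℕ))).eval R)) := by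
  rw [part1 p R hR αt hsys, part2 p R αt hsys hdet]
  rw [show 2*(p+1) = (p+1) + (p+1) by ring, pow_add]
  have hRn : R ^ (p+1) ≠ 0 := by positivity
  field_simp
  ring
end
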